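/- arXiv:1907.10080 — 3 statements merged into one kernel-verified Lean document; each statement's English description precedes it below -/
import Mathlib

section
/- Let Q : ℝ^N → ℝ^N, X : ℝ^N → ℝ with U(c,c') = X(c') - ⟨c, Q(c')⟩, and suppose each component Q_j is bounded by q̄ > 0 and continuous. If for every c the map c' ↦ U(c,c') is maximized at c' = c, and if the map t ↦ U((c¹,…,c^{j-1},t,c^{j+1},…,c^N), (c¹,…,c^{j-1},t,c^{j+1},…,c^N)) is absolutely continuous, then letting V(c) = U(c,c), for any coordinate j and any t₁, t₂ in the type interval: V(c¹,…,t₁,…,c^N) - V(c¹,…,t₂,…,c^N) = -∫_{t₂}^{t₁} Q_j(c¹,…,s,…,c^N) ds. -/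
/-- A function `f : ℝ → ℝ` is absolutely continuous: for every `ε > 0` there is `δ > 0`
such that for every finite collection of pairwise disjoint intervals of total length `< δ`,
the total variation of `f` over them is `< ε`. -/
def AbsolutelyContinuousFun (f : ℝ → ℝ) : Prop :=
  ∀ ε > 0, ∃ δ > 0, ∀ (n : ℕ) (a b : Fin n → ℝ),
    (∀ k, a k ≤ b k) →
    (Pairwise fun k l => Disjoint (Set.Ioo (a k) (b k)) (Set.Ioo (a l) (b l))) →
    (∑ k, (b k - a k)) < δ → (∑ k, |f (b k) - f (a k)|) < ε

/-- Envelope-theorem characterization of the truthful value function `V(c) = U(c,c)`. -/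
theorem stmt_1 {N : ℕ} (Q : (Fin N → ℝ) → Fin N → ℝ) (X : (Fin N → ℝ) → ℝ)
    (U : (Fin N → ℝ) → (Fin N → ℝ) → ℝ) (V : (Fin N → ℝ) → ℝ)
    (qbar : ℝ) (hqbar : 0 < qbar)
    (hU : ∀ c c', U c c' = X c' - ∑ j, c j * Q c' j)
    (hV : ∀ c, V c = U c c)
    (hbound : ∀ c j, |Q c j| ≤ qbar)
    (hcont : ∀ j, Continuous fun c => Q c j)
    (hmax : ∀ c c', U c c' ≤ U c c)
    (hAC : ∀ (c : Fin N → ℝ) (j : Fin N),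
      AbsolutelyContinuousFun fun t => V (Function.update c j t)) :
    ∀ (c : Fin N → ℝ) (j : Fin N) (t₁ t₂ : ℝ),
      V (Function.update c j t₁) - V (Function.update c j t₂) =
        -(∫ s in t₂..t₁, Q (Function.update c j s) j) := by
  intro c j t₁ t₂
  set u : ℝ → Fin N → ℝ := Function.update c j with hu
  set g : ℝ → ℝ := fun t => V (u t) with hg
  set f : ℝ → ℝ := fun s => Q (u s) j with hf
  have hfc : Continuous f := (hcont j).comp (continuous_const.update j continuous_id)
  -- sum identity
  have hsum : ∀ s t : ℝ, (∑ i, u s i * Q (u t) i) =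
      (∑ i, u t i * Q (u t) i) + (s - t) * f t := by
    intro s t
    have h1 : ∀ s' : ℝ, (fun i => u s' i * Q (u t) i) =
        Function.update (fun i => c i * Q (u t) i) j (s' * Q (u t) j) := by
      intro s'
      funext i
      by_cases hij : i = j
      · subst hij; simp [hu]
      · simp [hu, Function.update_of_ne hij]
    rw [h1 s, h1 t, Finset.sum_update_of_mem (Finset.mem_univ j),
      Finset.sum_update_of_mem (Finset.mem_univ j)]
    ring
  -- key envelope inequality
  have key : ∀ s t : ℝ, (t - s) * f t ≤ g s - g t := by
    intro s t
    have h := hmax (u s) (u t)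
    rw [hU (u s) (u t), hsum s t] at h
    have hgs : g s = U (u s) (u s) := hV (u s)
    have hgt : g t = X (u t) - ∑ i, u t i * Q (u t) i := by
      rw [hg]; simp only []; rw [hV (u t), hU (u t) (u t)]
    rw [hgs]
    rw [hgt]
    linarith
  -- derivative of g
  have hderiv : ∀ t : ℝ, HasDerivAt g (-(f t)) t := by
    intro t
    rw [hasDerivAt_iff_isLittleO]
    rw [Asymptotics.isLittleO_iff]
    intro ε hε
    have hft : ContinuousAt f t := hfc.continuousAt
    have := Metric.continuousAt_iff.mp hft ε hε
    obtain ⟨δ, hδ, hδf⟩ := this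
    filter_upwards [Metric.ball_mem_nhds t hδ] with s hs
    have h1 : (t - s) * f t ≤ g s - g t := key s t
    have h2 : (s - t) * f s ≤ g t - g s := key t s
    have habs : |g s - g t - (s - t) • (-(f t))| ≤ |s - t| * |f s - f t| := by
      simp only [smul_eq_mul]
      have e1 : 0 ≤ g s - g t - (s - t) * (-(f t)) := by linarith
      have e2 : g s - g t - (s - t) * (-(f t)) ≤ (s - t) * (f t - f s) := by linarith
      rw [abs_of_nonneg e1]
      calc g s - g t - (s - t) * (-(f t)) ≤ (s - t) * (f t - f s) := e2
        _ ≤ |(s - t) * (f t - f s)| := le_abs_self _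
        _ = |s - t| * |f s - f t| := by rw [abs_mul, abs_sub_comm (f t)]
    have hfs : |f s - f t| ≤ ε := by
      rcases eq_or_ne s t with rfl | hst
      · simp [le_of_lt hε]
      · exact le_of_lt (hδf (by simpa [Real.dist_eq] using hs))
    calc ‖g s - g t - (s - t) • (-(f t))‖ = |g s - g t - (s - t) • (-(f t))| := rfl
      _ ≤ |s - t| * |f s - f t| := habs
      _ ≤ |s - t| * ε := by
          exact mul_le_mul_of_nonneg_left hfs (abs_nonneg _)
      _ = ε * ‖s - t‖ := by rw [mul_comm]; rfl
  have hint : IntervalIntegrable (fun s => -(f s)) MeasureTheory.volume t₂ t₁ :=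
    (hfc.neg.intervalIntegrable t₂ t₁)
  have := intervalIntegral.integral_eq_sub_of_hasDerivAt
    (f := g) (f' := fun s => -(f s)) (fun x _ => hderiv x) hint
  have hneg : (∫ s in t₂..t₁, -(f s)) = -(∫ s in t₂..t₁, f s) :=
    intervalIntegral.integral_neg
  rw [hneg] at this
  exact this.symm
end

section
/- Suppose d_i - k q̄ - ∑_{i'∈V(i)} 1/(2r(i,i')) < 0 < d_i - k q̄ + ∑_{i'∈V(i)} 3/(2r(i,i')). Then for each fixed λ_{-i} with positive components there exists a unique x > 0 such that F_i(x, λ_{-i}) = k q̄. Moreover, the resulting function g_i^k(λ_{-i}) is increasing in each coordinate λ_{i'} for i' ∈ V(i). -/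
/-!
Each summand of `F_i`, written in closed form as `(3λ + x)(λ - x) / (2r(x + λ)²)`, is strictly
decreasing in `x`, strictly increasing in `λ`, continuous on `x > 0`, and tends to `3/(2r)` as
`x → 0⁺` and to `-1/(2r)` as `x → ∞` (it depends only on `λ / x`). The hypotheses put `k q̄`
strictly between the two limits of `F_i`, so the intermediate value theorem gives a root, unique
by strict monotonicity. Raising one `λ_{i'}` raises `F_i` at the old root, and since `F_i` is
decreasing in `x` the new root lies further right.
-/

open Filter Set Topology

lemma existsUnique_pos_eq_of_tendsto {f : ℝ → ℝ} {L₀ L₁ c : ℝ}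
    (hcont : ContinuousOn f (Ioi 0)) (hanti : StrictAntiOn f (Ioi 0))
    (h₀ : Tendsto f (𝓝[>] 0) (𝓝 L₀)) (h₁ : Tendsto f atTop (𝓝 L₁))
    (hc₀ : c < L₀) (hc₁ : L₁ < c) : ∃! x, 0 < x ∧ f x = c := by
  obtain ⟨a, ha, hfa⟩ : ∃ a, 0 < a ∧ c < f a :=
    ((h₀.eventually (lt_mem_nhds hc₀)).and self_mem_nhdsWithin).exists.imp
      fun _ h => ⟨h.2, h.1⟩
  obtain ⟨b, hab, hfb⟩ : ∃ b, a ≤ b ∧ f b < c :=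
    ((eventually_ge_atTop a).and (h₁.eventually (gt_mem_nhds hc₁))).exists
  obtain ⟨x, hx, hfx⟩ := intermediate_value_Icc' hab (hcont.mono fun y hy => ha.trans_le hy.1)
    ⟨hfb.le, hfa.le⟩
  exact ⟨x, ⟨ha.trans_le hx.1, hfx⟩, fun y hy => hanti.injOn hy.1 (ha.trans_le hx.1)
    (hy.2.trans hfx.symm)⟩

/-- The summand of `F_i` for the neighbour `i'`, with `r = r(i,i')` and `m = λ_{i'}`. -/
noncomputable def edgeTerm (r m x : ℝ) : ℝ :=
  (m - x) / (r * (x + m)) + (m - x) ^ 2 / (2 * r * (x + m) ^ 2)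

lemma edgeTerm_eq {r m x : ℝ} (hr : r ≠ 0) (hxm : x + m ≠ 0) :
    edgeTerm r m x = (3 * m + x) * (m - x) / (2 * r * (x + m) ^ 2) := by
  unfold edgeTerm
  field_simp
  ring

lemma edgeTerm_strictAntiOn {r m : ℝ} (hr : 0 < r) (hm : 0 < m) :
    StrictAntiOn (edgeTerm r m) (Ioi 0) := by
  intro x (hx : 0 < x) y (hy : 0 < y) hxy
  rw [edgeTerm_eq hr.ne' (by positivity), edgeTerm_eq hr.ne' (by positivity),
    div_lt_div_iff₀ (by positivity) (by positivity)]
  nlinarith [mul_pos hr (mul_pos (mul_pos (mul_pos hm hm) (sub_pos.2 hxy))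
    (show 0 < x + y + 2 * m by positivity))]

lemma edgeTerm_lt_edgeTerm {r m m' x : ℝ} (hr : 0 < r) (hm : 0 < m) (hmm' : m < m')
    (hx : 0 < x) : edgeTerm r m x < edgeTerm r m' x := by
  have hm' : 0 < m' := hm.trans hmm'
  rw [edgeTerm_eq hr.ne' (by positivity), edgeTerm_eq hr.ne' (by positivity),
    div_lt_div_iff₀ (by positivity) (by positivity)]
  nlinarith [mul_pos hr (mul_pos (mul_pos hx (sub_pos.2 hmm'))
    (show 0 < x * (m + m') + 2 * m * m' by positivity))]

lemma edgeTerm_at_zero (r : ℝ) {m : ℝ} (hm : m ≠ 0) : edgeTerm r m 0 = 3 / (2 * r) := by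
  rcases eq_or_ne r 0 with rfl | hr
  · simp [edgeTerm]
  simp only [edgeTerm, sub_zero, zero_add]
  field_simp
  ring

lemma edgeTerm_div_one {r m x : ℝ} (hx : x ≠ 0) : edgeTerm r (m / x) 1 = edgeTerm r m x := by
  unfold edgeTerm
  rw [show m / x - 1 = (m - x) / x by field_simp, show 1 + m / x = (x + m) / x by field_simp]
  rw [div_pow, div_pow, mul_div_assoc', mul_div_assoc', div_div_div_cancel_right₀ hx,
    div_div_div_cancel_right₀ (pow_ne_zero 2 hx)]

lemma continuousOn_edgeTerm {r m : ℝ} (hr : r ≠ 0) (hm : 0 ≤ m) :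
    ContinuousOn (edgeTerm r m) (Ioi 0) := by
  intro x hx
  have : x + m ≠ 0 := by have := mem_Ioi.1 hx; positivity
  unfold edgeTerm
  apply ContinuousAt.continuousWithinAt
  fun_prop (disch := positivity)

lemma tendsto_edgeTerm_nhdsGT_zero {r m : ℝ} (hr : r ≠ 0) (hm : 0 < m) :
    Tendsto (edgeTerm r m) (𝓝[>] 0) (𝓝 (3 / (2 * r))) := by
  rw [← edgeTerm_at_zero r hm.ne']
  apply ContinuousAt.continuousWithinAt
  unfold edgeTerm
  fun_prop (disch := simp [hr, hm.ne'])

lemma tendsto_edgeTerm_atTop {r : ℝ} (hr : r ≠ 0) (m : ℝ) :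
    Tendsto (edgeTerm r m) atTop (𝓝 (-(1 / (2 * r)))) := by
  have hcont : ContinuousAt (fun t => edgeTerm r t 1) 0 := by
    unfold edgeTerm
    fun_prop (disch := simpa)
  have hval : edgeTerm r 0 1 = -(1 / (2 * r)) := by
    simp only [edgeTerm]; field_simp; ring
  rw [← hval]
  refine (hcont.tendsto.comp ((tendsto_const_nhds (x := m)).div_atTop tendsto_id)).congr' ?_
  filter_upwards [eventually_gt_atTop 0] with x hx
  exact edgeTerm_div_one hx.ne'

section edgeSum

variable {ι : Type*} (s : Finset ι) (r : ι → ℝ)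

noncomputable def edgeSum (μ : ι → ℝ) (x : ℝ) : ℝ := ∑ i ∈ s, edgeTerm (r i) (μ i) x

variable {s r}

lemma edgeSum_strictAntiOn {μ : ι → ℝ} (hs : s.Nonempty) (hr : ∀ i ∈ s, 0 < r i)
    (hμ : ∀ i ∈ s, 0 < μ i) : StrictAntiOn (edgeSum s r μ) (Ioi 0) :=
  fun _ hx _ hy hxy => Finset.sum_lt_sum_of_nonempty hs fun i hi =>
    edgeTerm_strictAntiOn (hr i hi) (hμ i hi) hx hy hxy

lemma edgeSum_lt_edgeSum {μ μ' : ι → ℝ} {x : ℝ} {i : ι} (hr : ∀ i ∈ s, 0 < r i) (hx : 0 < x)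
    (hi : i ∈ s) (hμ : 0 < μ i) (hlt : μ i < μ' i) (heq : ∀ j ∈ s, j ≠ i → μ j = μ' j) :
    edgeSum s r μ x < edgeSum s r μ' x := by
  have hterm := edgeTerm_lt_edgeTerm (hr i hi) hμ hlt hx
  refine Finset.sum_lt_sum (fun j hj => ?_) ⟨i, hi, hterm⟩
  rcases eq_or_ne j i with rfl | hne
  · exact hterm.le
  · rw [heq j hj hne]

lemma continuousOn_edgeSum {μ : ι → ℝ} (hr : ∀ i ∈ s, r i ≠ 0) (hμ : ∀ i ∈ s, 0 ≤ μ i) :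
    ContinuousOn (edgeSum s r μ) (Ioi 0) :=
  continuousOn_finsetSum s fun i hi => continuousOn_edgeTerm (hr i hi) (hμ i hi)

lemma tendsto_edgeSum_nhdsGT_zero {μ : ι → ℝ} (hr : ∀ i ∈ s, r i ≠ 0) (hμ : ∀ i ∈ s, 0 < μ i) :
    Tendsto (edgeSum s r μ) (𝓝[>] 0) (𝓝 (∑ i ∈ s, 3 / (2 * r i))) :=
  tendsto_finsetSum s fun i hi => tendsto_edgeTerm_nhdsGT_zero (hr i hi) (hμ i hi)

lemma tendsto_edgeSum_atTop (μ : ι → ℝ) (hr : ∀ i ∈ s, r i ≠ 0) :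
    Tendsto (edgeSum s r μ) atTop (𝓝 (-∑ i ∈ s, 1 / (2 * r i))) := by
  rw [← Finset.sum_neg_distrib]
  exact tendsto_finsetSum s fun i hi => tendsto_edgeTerm_atTop (hr i hi) (μ i)

end edgeSum

theorem stmt_11_general {I : Type*} (Vi : Finset I)
    (r : I → ℝ) (hr : ∀ i' ∈ Vi, 0 < r i')
    (d qbar : ℝ) (k : ℕ)
    (hlow : d - k * qbar - ∑ i' ∈ Vi, 1 / (2 * r i') < 0)
    (hhigh : 0 < d - k * qbar + ∑ i' ∈ Vi, 3 / (2 * r i'))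
    (F : ℝ → (I → ℝ) → ℝ)
    (hF : ∀ x μ, F x μ = d + ∑ i' ∈ Vi, ((μ i' - x) / (r i' * (x + μ i')) +
      (μ i' - x) ^ 2 / (2 * r i' * (x + μ i') ^ 2))) :
    (∀ μ : I → ℝ, (∀ j, 0 < μ j) → ∃! x : ℝ, 0 < x ∧ F x μ = k * qbar) ∧
    (∀ g : (I → ℝ) → ℝ,
      (∀ μ : I → ℝ, (∀ j, 0 < μ j) → 0 < g μ ∧ F (g μ) μ = k * qbar) →
      ∀ i' ∈ Vi, ∀ μ μ' : I → ℝ, (∀ j, 0 < μ j) → (∀ j, 0 < μ' j) →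
        (∀ j, j ≠ i' → μ j = μ' j) → μ i' < μ' i' → g μ < g μ') := by
  have hF' : ∀ x μ, F x μ = d + edgeSum Vi r μ x := hF
  have hVi : Vi.Nonempty := by
    rw [Finset.nonempty_iff_ne_empty]
    rintro rfl
    simp only [Finset.sum_empty] at hlow hhigh
    linarith
  have hr₀ : ∀ i ∈ Vi, r i ≠ 0 := fun i hi => (hr i hi).ne'
  have hanti : ∀ μ : I → ℝ, (∀ j, 0 < μ j) → StrictAntiOn (fun x => d + edgeSum Vi r μ x) (Ioi 0) :=
    fun μ hμ => (edgeSum_strictAntiOn hVi hr fun i _ => hμ i).const_add d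
  refine ⟨fun μ hμ => ?_, fun g hg i hi μ μ' hμ hμ' heq hlt => ?_⟩
  · simp only [hF']
    exact existsUnique_pos_eq_of_tendsto
      (continuousOn_const.add (continuousOn_edgeSum hr₀ fun i _ => (hμ i).le)) (hanti μ hμ)
      ((tendsto_edgeSum_nhdsGT_zero hr₀ fun i _ => hμ i).const_add d)
      ((tendsto_edgeSum_atTop μ hr₀).const_add d) (by linarith) (by linarith)
  · obtain ⟨hpos, hval⟩ := hg μ hμ
    obtain ⟨hpos', hval'⟩ := hg μ' hμ'
    rw [hF'] at hval hval'
    have hshift : edgeSum Vi r μ (g μ) < edgeSum Vi r μ' (g μ) :=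
      edgeSum_lt_edgeSum hr hpos hi (hμ i) hlt fun j _ hj => heq j hj
    exact ((hanti μ' hμ').lt_iff_gt hpos' hpos).1 (by linarith)

/-- Existence and uniqueness of the level point `g_i^k(λ_{-i})`, the unique `x > 0` with
`F_i(x, λ_{-i}) = k q̄`, together with strict monotonicity of `g_i^k` in each neighbor's
dual variable. -/
theorem stmt_11 {I : Type*} [Fintype I] (Vi : Finset I)
    (r : I → ℝ) (hr : ∀ i' ∈ Vi, 0 < r i')
    (d qbar : ℝ) (hqbar : 0 < qbar) (k : ℕ)
    (hlow : d - k * qbar - ∑ i' ∈ Vi, 1 / (2 * r i') < 0)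
    (hhigh : 0 < d - k * qbar + ∑ i' ∈ Vi, 3 / (2 * r i'))
    (F : ℝ → (I → ℝ) → ℝ)
    (hF : ∀ x μ, F x μ = d + ∑ i' ∈ Vi, ((μ i' - x) / (r i' * (x + μ i')) +
      (μ i' - x) ^ 2 / (2 * r i' * (x + μ i') ^ 2))) :
    (∀ μ : I → ℝ, (∀ j, 0 < μ j) → ∃! x : ℝ, 0 < x ∧ F x μ = k * qbar) ∧
    (∀ g : (I → ℝ) → ℝ,
      (∀ μ : I → ℝ, (∀ j, 0 < μ j) → 0 < g μ ∧ F (g μ) μ = k * qbar) →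
      ∀ i' ∈ Vi, ∀ μ μ' : I → ℝ, (∀ j, 0 < μ j) → (∀ j, 0 < μ' j) →
        (∀ j, j ≠ i' → μ j = μ' j) → μ i' < μ' i' → g μ < g μ') :=
  stmt_11_general Vi r hr d qbar k hlow hhigh F hF
end

section
/- Let Λ_i(λ_{-i}) denote the unique x solving F_i(x, λ_{-i}) ∈ K_i(x) (as in the previous context). Then Λ_i is nondecreasing: if λ_{-i} ≤ λ'_{-i} componentwise, then Λ_i(λ_{-i}) ≤ Λ_i(λ'_{-i}). -/
/-- The dual best response `Λ_i` is nondecreasing: `F_i` is strictly decreasing in the own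
variable, nondecreasing in the others, `K_i` is a monotone set-valued map, and `Λ_i(λ_{-i})`
is the unique `x` with `F_i(x,λ_{-i}) ∈ K_i(x)`. -/
theorem stmt_16 {I : Type*} (Fi : ℝ → (I → ℝ) → ℝ) (K : ℝ → Set ℝ)
    (hFx : ∀ μ, StrictAnti fun x => Fi x μ)
    (hFmu : ∀ (x : ℝ) (μ μ' : I → ℝ), μ ≤ μ' → Fi x μ ≤ Fi x μ')
    (hK : ∀ x x' y y', x < x' → y ∈ K x → y' ∈ K x' → y ≤ y')
    (Λ : (I → ℝ) → ℝ)
    (hΛ : ∀ μ, Fi (Λ μ) μ ∈ K (Λ μ))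
    (huniq : ∀ μ x, Fi x μ ∈ K x → x = Λ μ) :
    ∀ μ μ' : I → ℝ, μ ≤ μ' → Λ μ ≤ Λ μ' := by
  intro μ μ' hle
  by_contra h
  push_neg at h
  have h1 : Fi (Λ μ') μ' ≤ Fi (Λ μ) μ := hK _ _ _ _ h (hΛ μ') (hΛ μ)
  have h2 : Fi (Λ μ) μ < Fi (Λ μ') μ := hFx μ h
  have h3 : Fi (Λ μ') μ ≤ Fi (Λ μ') μ' := hFmu _ _ _ hle
  linarith
end
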